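/- Let B ⊆ ℝ be a Bernstein set. Then for all real numbers a < b, the set (a,b) ∩ ℚ is not a Gδ set in the subspace ℚ ∪ B of the Michael line. -/
import Mathlib


open Set Topology

/-- The rationals, as a subset of `ℝ`. -/
def ratSet : Set ℝ := Set.range (fun q : ℚ => (q : ℝ))

/-- The Michael line: `ℝ` with the topology generated by the base
`{U ∪ K : U Euclidean-open, K ⊆ irrationals}`. -/
def michaelLine : TopologicalSpace ℝ :=
  TopologicalSpace.generateFrom
    {S | ∃ U K : Set ℝ, IsOpen U ∧ K ⊆ {x : ℝ | Irrational x} ∧ S = U ∪ K}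

/-- A Bernstein set: every uncountable closed subset of `ℝ` meets both it and its complement. -/
def IsBernstein (B : Set ℝ) : Prop :=
  ∀ C : Set ℝ, IsClosed C → ¬C.Countable → (C ∩ B).Nonempty ∧ (C ∩ Bᶜ).Nonempty

lemma ratSet_countable : ratSet.Countable := Set.countable_range _

lemma not_countable_cantor : ¬ Countable (ℕ → Bool) := by
  intro h
  have e : (ℕ → Prop) ≃ (ℕ → Bool) := Equiv.piCongrRight fun _ => Equiv.propEquivBool
  have h2 : Countable (ℕ → Prop) := Countable.of_equiv _ e.symm
  obtain ⟨f⟩ := countable_iff_nonempty_embedding.mp h2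
  exact Function.cantor_injective (α := ℕ) f f.injective

lemma aux_closed_range {t t' : TopologicalSpace ℝ} (hle : t' ≤ t) (ht2 : @T2Space ℝ t)
    (hpol : @PolishSpace ℝ t') {s : Set ℝ} (hcl : IsClosed[t'] s) (hunc : ¬ s.Countable) :
    ∃ C : Set ℝ, IsClosed[t] C ∧ ¬ C.Countable ∧ C ⊆ s := by
  obtain ⟨f, hfs, hfc, hfi⟩ :=
    @IsClosed.exists_nat_bool_injection_of_not_countable ℝ t' hpol s hcl hunc
  have hfc' : @Continuous (ℕ → Bool) ℝ _ t f := by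
    rw [@continuous_iff_coinduced_le _ _ f _ t'] at hfc
    rw [@continuous_iff_coinduced_le _ _ f _ t]
    exact le_trans hfc hle
  refine ⟨Set.range f, ?_, ?_, hfs⟩
  · exact @IsCompact.isClosed ℝ t ht2 _ (@isCompact_range _ ℝ _ t _ f hfc')
  · intro hcnt
    apply not_countable_cantor
    have : Countable (Set.range f) := hcnt.to_subtype
    exact Countable.of_equiv _ (Equiv.ofInjective f hfi).symm

/-- Any uncountable Borel set of reals contains an uncountable closed set. -/
lemma exists_closed_uncountable_subset {s : Set ℝ} (hs : MeasurableSet s)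
    (hunc : ¬ s.Countable) : ∃ C : Set ℝ, IsClosed C ∧ ¬ C.Countable ∧ C ⊆ s := by
  obtain ⟨t', tle, tpolish, sclosed, -⟩ := hs.isClopenable
  exact aux_closed_range tle inferInstance tpolish sclosed hunc

/-- In the Michael line, every rational point of an open set is in its Euclidean interior. -/
lemma michael_open_rat {W : Set ℝ} (hW : IsOpen[michaelLine] W) :
    ∀ x ∈ W, x ∈ ratSet → x ∈ interior W := by
  induction hW with
  | basic S hS =>
    obtain ⟨U, K, hU, hK, rfl⟩ := hS
    intro x hx hxq
    obtain ⟨q, rfl⟩ := hxq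
    have hxU : (q : ℝ) ∈ U := by
      rcases hx with h | h
      · exact h
      · exact absurd (hK h) (Rat.not_irrational q)
    exact interior_maximal subset_union_left hU hxU
  | univ => intro x _ _; simp
  | inter W₁ W₂ _ _ ih₁ ih₂ =>
    intro x hx hxq
    rw [interior_inter]
    exact ⟨ih₁ x hx.1 hxq, ih₂ x hx.2 hxq⟩
  | sUnion S _ ih =>
    rintro x ⟨T, hT, hxT⟩ hxq
    exact interior_mono (subset_sUnion_of_mem hT) (ih T hT x hxT hxq)

theorem stmt5 (B : Set ℝ) (hB : IsBernstein B) (a b : ℝ) (hab : a < b) :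
    ¬ @IsGδ ↥(ratSet ∪ B)
        (TopologicalSpace.induced (Subtype.val : ↥(ratSet ∪ B) → ℝ) michaelLine)
        ((Subtype.val : ↥(ratSet ∪ B) → ℝ) ⁻¹' (Set.Ioo a b ∩ ratSet)) := by
  intro h
  classical
  set X := ratSet ∪ B with hX
  obtain ⟨T, hTopen, hTcnt, hTeq⟩ := h
  -- For each `t ∈ T`, choose a Michael-open set `W t` with `t = val ⁻¹' W t`.
  have hchoice : ∀ t : T, ∃ W : Set ℝ, IsOpen[michaelLine] W ∧
      (Subtype.val : X → ℝ) ⁻¹' W = (t : Set X) := by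
    intro t
    exact (@isOpen_induced_iff X ℝ michaelLine (t : Set X) Subtype.val).mp (hTopen t t.2)
  choose W hWopen hWpre using hchoice
  -- The Euclidean interiors `V t` all contain `(a,b) ∩ ℚ`.
  set V : T → Set ℝ := fun t => interior (W t) with hV
  have hQ : ∀ t : T, Ioo a b ∩ ratSet ⊆ V t := by
    intro t x hx
    have hxX : x ∈ X := Or.inl hx.2
    have hxs : (⟨x, hxX⟩ : X) ∈ (Subtype.val : X → ℝ) ⁻¹' (Ioo a b ∩ ratSet) := hx
    rw [hTeq] at hxs
    have hxt : (⟨x, hxX⟩ : X) ∈ (t : Set X) := hxs t.1 t.2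
    have hxW : x ∈ W t := by rw [← hWpre t] at hxt; exact hxt
    exact michael_open_rat (hWopen t) x hxW hx.2
  haveI : Countable T := hTcnt.to_subtype
  -- The set `G'` of irrational points of `(a,b)` lying in every `V t`.
  set G' : Set ℝ := (Ioo a b ∩ ⋂ t : T, V t) \ ratSet with hG'
  -- `G'` is uncountable, via Baire category.
  have hGunc : ¬ G'.Countable := by
    intro hcnt
    have hres : ∀ t : T, (V t ∪ (Icc a b)ᶜ) ∈ residual ℝ := by
      intro t
      apply residual_of_dense_open
      · exact isOpen_interior.union isClosed_Icc.isOpen_compl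
      · rw [dense_iff_closure_eq, ← univ_subset_iff]
        intro x _
        rcases Classical.em (x ∈ Ioo a b) with hx | hx
        · apply closure_mono (subset_union_left)
          apply closure_mono (hQ t)
          have hdense : Dense ratSet := Rat.denseRange_cast
          have h5 := hdense.open_subset_closure_inter (t := Ioo a b) isOpen_Ioo
          exact closure_mono (by exact fun y hy => ⟨hy.1, hy.2⟩) (h5 hx)
        · apply closure_mono (subset_union_right)
          have hcc : closure ((Icc a b)ᶜ) = (Ioo a b)ᶜ := by
            rw [closure_compl, interior_Icc]
          rw [hcc]
          exact hx
    have hres2 : ratSetᶜ ∈ residual ℝ := by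
      rw [← ratSet.biUnion_of_singleton, compl_iUnion₂]
      apply (countable_bInter_mem ratSet_countable).mpr
      intro x _
      exact residual_of_dense_open isOpen_compl_singleton (dense_compl_singleton x)
    have hres3 : G'ᶜ ∈ residual ℝ := by
      have : G'ᶜ ⊇ ⋂ x ∈ G', {x}ᶜ := by
        intro y hy hyG
        simp only [mem_iInter, mem_compl_iff, mem_singleton_iff] at hy
        exact hy y hyG rfl
      apply Filter.mem_of_superset _ this
      apply (countable_bInter_mem hcnt).mpr
      intro x _
      exact residual_of_dense_open isOpen_compl_singleton (dense_compl_singleton x)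
    have hbig : ((⋂ t : T, (V t ∪ (Icc a b)ᶜ)) ∩ ratSetᶜ ∩ G'ᶜ) ∈ residual ℝ :=
      Filter.inter_mem (Filter.inter_mem ((countable_iInter_mem).mpr hres) hres2) hres3
    have hdense := dense_of_mem_residual hbig
    obtain ⟨x, hxR, hxIoo⟩ := hdense.exists_mem_open isOpen_Ioo (nonempty_Ioo.mpr hab)
    obtain ⟨⟨hx1, hx2⟩, hx3⟩ := hxR
    apply hx3
    refine ⟨⟨hxIoo, ?_⟩, hx2⟩
    rw [mem_iInter]
    intro t
    have := mem_iInter.mp hx1 t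
    rcases this with h | h
    · exact h
    · exact absurd (mem_Icc_of_Ioo hxIoo) h
  -- `G'` is Borel.
  have hGmeas : MeasurableSet G' := by
    apply MeasurableSet.diff
    · exact (measurableSet_Ioo.inter
        (MeasurableSet.iInter fun t => isOpen_interior.measurableSet))
    · exact ratSet_countable.measurableSet
  -- Extract an uncountable closed subset, and apply Bernstein.
  obtain ⟨C, hCclosed, hCunc, hCsub⟩ := exists_closed_uncountable_subset hGmeas hGunc
  obtain ⟨⟨x, hxC, hxB⟩, -⟩ := hB C hCclosed hCunc
  have hxG : x ∈ G' := hCsub hxC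
  have hxX : x ∈ X := Or.inr hxB
  -- `x` lies in every element of `T`, so in the intersection, so it is rational: contradiction.
  have hxs : (⟨x, hxX⟩ : X) ∈ (Subtype.val : X → ℝ) ⁻¹' (Ioo a b ∩ ratSet) := by
    rw [hTeq]
    intro t ht
    have hxV : x ∈ V ⟨t, ht⟩ := mem_iInter.mp hxG.1.2 ⟨t, ht⟩
    have hxW : x ∈ W ⟨t, ht⟩ := interior_subset hxV
    have hmem : (⟨x, hxX⟩ : X) ∈ (Subtype.val : X → ℝ) ⁻¹' W ⟨t, ht⟩ := hxW
    rw [hWpre ⟨t, ht⟩] at hmem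
    exact hmem
  exact hxG.2 hxs.2
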